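/- In the three-point loop algebra L = sl2 ⊗ K[T, T^{-1}, (T-1)^{-1}], the six elements X⊗1, Y⊗1, Z⊗1, Y⊗T + Z⊗(T-1), Z⊗T' + X⊗(T'-1), X⊗T'' + Y⊗(T''-1) (where T' = 1-T^{-1}, T'' = (1-T)^{-1}) satisfy the Tetrahedron algebra relations: each pair among the first three satisfies [X_{hi},X_{ij}] = 2X_{hi} + 2X_{ij} type relations, and each 'opposite' pair (e.g. X⊗1 and Y⊗T + Z⊗(T-1)) satisfies the Dolan-Grady relations [u,[u,[u,v]]] = 4[u,v] and [v,[v,[v,u]]] = 4[v,u]. -/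

import Mathlib

set_option synthInstance.maxHeartbeats 1000000
set_option maxHeartbeats 1000000

namespace TetPaper
variable {K : Type*} [Field K]

/-- Auxiliary bracket for `sl2` in the `X,Y,Z` coordinates, where
`[X,Y] = 2X+2Y`, `[Y,Z] = 2Y+2Z`, `[Z,X] = 2Z+2X`. -/
def sl2xb (u v : Fin 3 → K) : Fin 3 → K :=
  ![2*(u 0 * v 1 - u 1 * v 0) + 2*(u 2 * v 0 - u 0 * v 2),
    2*(u 0 * v 1 - u 1 * v 0) + 2*(u 1 * v 2 - u 2 * v 1),
    2*(u 2 * v 0 - u 0 * v 2) + 2*(u 1 * v 2 - u 2 * v 1)]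

lemma sl2xb_add_lie (x y z : Fin 3 → K) : sl2xb (x + y) z = sl2xb x z + sl2xb y z := by
  funext i; fin_cases i <;> simp [sl2xb] <;> ring

lemma sl2xb_lie_add (x y z : Fin 3 → K) : sl2xb x (y + z) = sl2xb x y + sl2xb x z := by
  funext i; fin_cases i <;> simp [sl2xb] <;> ring

lemma sl2xb_lie_self (x : Fin 3 → K) : sl2xb x x = 0 := by
  funext i; fin_cases i <;> simp [sl2xb, -mul_eq_zero] <;> ring

lemma sl2xb_leibniz (x y z : Fin 3 → K) :
    sl2xb x (sl2xb y z) = sl2xb (sl2xb x y) z + sl2xb y (sl2xb x z) := by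
  funext i; fin_cases i <;> simp [sl2xb] <;> ring

lemma sl2xb_smul (t : K) (x y : Fin 3 → K) : sl2xb x (t • y) = t • sl2xb x y := by
  funext i; fin_cases i <;> simp [sl2xb] <;> ring

end TetPaper

/-- The Lie algebra over `K` with basis `X, Y, Z` and brackets
`[X,Y] = 2X+2Y`, `[Y,Z] = 2Y+2Z`, `[Z,X] = 2Z+2X`. -/
def Sl2X (K : Type*) := Fin 3 → K

noncomputable instance {K : Type*} [Field K] : AddCommGroup (Sl2X K) :=
  inferInstanceAs (AddCommGroup (Fin 3 → K))

noncomputable instance {K : Type*} [Field K] : Module K (Sl2X K) :=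
  inferInstanceAs (Module K (Fin 3 → K))

noncomputable instance {K : Type*} [Field K] : LieRing (Sl2X K) where
  bracket u v := TetPaper.sl2xb u v
  add_lie x y z := TetPaper.sl2xb_add_lie x y z
  lie_add x y z := TetPaper.sl2xb_lie_add x y z
  lie_self x := TetPaper.sl2xb_lie_self x
  leibniz_lie x y z := TetPaper.sl2xb_leibniz x y z

noncomputable instance {K : Type*} [Field K] : LieAlgebra K (Sl2X K) where
  lie_smul t x y := TetPaper.sl2xb_smul t x y

namespace Sl2X
variable (K : Type*) [Field K]
/-- The basis vector `X`. -/
noncomputable def Xv : Sl2X K := (![1,0,0] : Fin 3 → K)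
/-- The basis vector `Y`. -/
noncomputable def Yv : Sl2X K := (![0,1,0] : Fin 3 → K)
/-- The basis vector `Z`. -/
noncomputable def Zv : Sl2X K := (![0,0,1] : Fin 3 → K)
end Sl2X
open scoped Polynomial

/-- The algebra `K[T, T⁻¹, (T-1)⁻¹]`, realized as the subalgebra of the field of
rational functions generated by `T`, `T⁻¹` and `(T-1)⁻¹`. -/
noncomputable def Arat (K : Type*) [Field K] : Subalgebra K (RatFunc K) :=
  Algebra.adjoin K {RatFunc.X, RatFunc.X⁻¹, (RatFunc.X - 1)⁻¹}

/-- The element `T` of `Arat K`. -/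
noncomputable def tA (K : Type*) [Field K] : Arat K :=
  ⟨RatFunc.X, Algebra.subset_adjoin (by simp)⟩

/-- The element `T⁻¹` of `Arat K`. -/
noncomputable def tiA (K : Type*) [Field K] : Arat K :=
  ⟨RatFunc.X⁻¹, Algebra.subset_adjoin (by simp)⟩

/-- The element `T' = 1 - T⁻¹` of `Arat K`. -/
noncomputable def tpA (K : Type*) [Field K] : Arat K := 1 - tiA K

/-- The element `T'' = (1-T)⁻¹` of `Arat K`. -/
noncomputable def tppA (K : Type*) [Field K] : Arat K :=
  ⟨(1 - RatFunc.X)⁻¹, by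
    have h1 : (RatFunc.X - 1)⁻¹ ∈ Arat K := Algebra.subset_adjoin (by simp)
    have h2 : ((1 : RatFunc K) - RatFunc.X)⁻¹ = -((RatFunc.X - 1)⁻¹) := by
      rw [← neg_sub, inv_neg]
    rw [h2]; exact neg_mem h1⟩

open scoped TensorProduct

/-- The three-point loop algebra `sl2 ⊗ K[T,T⁻¹,(T-1)⁻¹]`
(with the algebra factor written on the left). -/
noncomputable abbrev TPL (K : Type*) [Field K] := (Arat K) ⊗[K] Sl2X K

/-!
Everything follows formally from the brackets `⁅X,Y⁆ = 2X+2Y`, `⁅Y,Z⁆ = 2Y+2Z`, `⁅Z,X⁆ = 2Z+2X`,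
which are invariant under the cyclic relabelling `X → Y → Z → X`. Expanding `A`-linearly shows
that for every commutative algebra `A` and every `t ∈ A` the elements `1 ⊗ X` and
`t ⊗ Y + (t - 1) ⊗ Z` of `A ⊗ sl₂` form a Dolan–Grady pair. The three opposite pairs of the
Tetrahedron algebra are this pair and its two cyclic relabellings, with `t = T, T', T''`.
-/

open TensorProduct

def IsDolanGradyPair (R : Type*) {L : Type*} [CommRing R] [LieRing L] [LieAlgebra R L]
    (u v : L) : Prop :=
  ⁅u, ⁅u, ⁅u, v⁆⁆⁆ = (4 : R) • ⁅u, v⁆ ∧ ⁅v, ⁅v, ⁅v, u⁆⁆⁆ = (4 : R) • ⁅v, u⁆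

namespace LieAlgebra.ExtendScalars

variable {R A L : Type*} [CommRing R] [CommRing A] [Algebra R A] [LieRing L] [LieAlgebra R L]

theorem one_tmul_lie_one_tmul (x y : L) :
    ⁅(1 : A) ⊗ₜ[R] x, (1 : A) ⊗ₜ[R] y⁆ = (1 : A) ⊗ₜ[R] ⁅x, y⁆ := by
  rw [bracket_tmul, mul_one]

theorem isDolanGradyPair_one_tmul {x y z : L} (hxy : ⁅x, y⁆ = (2 : R) • x + (2 : R) • y)
    (hyz : ⁅y, z⁆ = (2 : R) • y + (2 : R) • z) (hzx : ⁅z, x⁆ = (2 : R) • z + (2 : R) • x)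
    (t : A) : IsDolanGradyPair R ((1 : A) ⊗ₜ[R] x) (t ⊗ₜ[R] y + (t - 1) ⊗ₜ[R] z) := by
  have hyx : ⁅y, x⁆ = -((2 : R) • x + (2 : R) • y) := by rw [← lie_skew, hxy]
  have hzy : ⁅z, y⁆ = -((2 : R) • y + (2 : R) • z) := by rw [← lie_skew, hyz]
  have hxz : ⁅x, z⁆ = -((2 : R) • z + (2 : R) • x) := by rw [← lie_skew, hzx]
  simp only [IsDolanGradyPair, tmul_eq_smul_one_tmul t, tmul_eq_smul_one_tmul (t - 1),
    lie_add, add_lie, lie_smul, smul_lie, lie_neg, lie_self, lie_zero, one_tmul_lie_one_tmul,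
    hxy, hyz, hzx, hyx, hzy, hxz, tmul_add, tmul_neg, tmul_smul, smul_zero]
  constructor <;> match_scalars <;> simp only [map_ofNat] <;> ring

end LieAlgebra.ExtendScalars

namespace Sl2X

variable (K : Type*) [Field K]

theorem lie_Xv_Yv : ⁅Xv K, Yv K⁆ = (2 : K) • Xv K + (2 : K) • Yv K := by
  change TetPaper.sl2xb _ _ =
    (2 : K) • (![1, 0, 0] : Fin 3 → K) + (2 : K) • (![0, 1, 0] : Fin 3 → K)
  funext i; fin_cases i <;> simp [TetPaper.sl2xb, Xv, Yv]

theorem lie_Yv_Zv : ⁅Yv K, Zv K⁆ = (2 : K) • Yv K + (2 : K) • Zv K := by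
  change TetPaper.sl2xb _ _ =
    (2 : K) • (![0, 1, 0] : Fin 3 → K) + (2 : K) • (![0, 0, 1] : Fin 3 → K)
  funext i; fin_cases i <;> simp [TetPaper.sl2xb, Yv, Zv]

theorem lie_Zv_Xv : ⁅Zv K, Xv K⁆ = (2 : K) • Zv K + (2 : K) • Xv K := by
  change TetPaper.sl2xb _ _ =
    (2 : K) • (![0, 0, 1] : Fin 3 → K) + (2 : K) • (![1, 0, 0] : Fin 3 → K)
  funext i; fin_cases i <;> simp [TetPaper.sl2xb, Xv, Zv]

end Sl2X

open LieAlgebra.ExtendScalars in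
theorem stmt11_general (K : Type*) [Field K]
    (x12 x23 x31 x03 x01 x02 : TPL K)
    (h12 : x12 = (1 : Arat K) ⊗ₜ[K] Sl2X.Xv K)
    (h23 : x23 = (1 : Arat K) ⊗ₜ[K] Sl2X.Yv K)
    (h31 : x31 = (1 : Arat K) ⊗ₜ[K] Sl2X.Zv K)
    (h03 : x03 = tA K ⊗ₜ[K] Sl2X.Yv K + (tA K - 1) ⊗ₜ[K] Sl2X.Zv K)
    (h01 : x01 = tpA K ⊗ₜ[K] Sl2X.Zv K + (tpA K - 1) ⊗ₜ[K] Sl2X.Xv K)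
    (h02 : x02 = tppA K ⊗ₜ[K] Sl2X.Xv K + (tppA K - 1) ⊗ₜ[K] Sl2X.Yv K) :
    (⁅x12, x23⁆ = (2:K) • x12 + (2:K) • x23) ∧
    (⁅x23, x31⁆ = (2:K) • x23 + (2:K) • x31) ∧
    (⁅x31, x12⁆ = (2:K) • x31 + (2:K) • x12) ∧
    (⁅x12, ⁅x12, ⁅x12, x03⁆⁆⁆ = (4:K) • ⁅x12, x03⁆) ∧
    (⁅x03, ⁅x03, ⁅x03, x12⁆⁆⁆ = (4:K) • ⁅x03, x12⁆) ∧
    (⁅x23, ⁅x23, ⁅x23, x01⁆⁆⁆ = (4:K) • ⁅x23, x01⁆) ∧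
    (⁅x01, ⁅x01, ⁅x01, x23⁆⁆⁆ = (4:K) • ⁅x01, x23⁆) ∧
    (⁅x31, ⁅x31, ⁅x31, x02⁆⁆⁆ = (4:K) • ⁅x31, x02⁆) ∧
    (⁅x02, ⁅x02, ⁅x02, x31⁆⁆⁆ = (4:K) • ⁅x02, x31⁆) := by
  subst h12 h23 h31 h03 h01 h02
  have hXY := Sl2X.lie_Xv_Yv K
  have hYZ := Sl2X.lie_Yv_Zv K
  have hZX := Sl2X.lie_Zv_Xv K
  have lie_one_tmul {x y : Sl2X K} (h : ⁅x, y⁆ = (2 : K) • x + (2 : K) • y) :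
      ⁅(1 : Arat K) ⊗ₜ[K] x, (1 : Arat K) ⊗ₜ[K] y⁆ = (2 : K) • (1 ⊗ₜ x) + (2 : K) • (1 ⊗ₜ y) := by
    rw [one_tmul_lie_one_tmul, h, tmul_add, tmul_smul, tmul_smul]
  have dgX := isDolanGradyPair_one_tmul hXY hYZ hZX (tA K)
  have dgY := isDolanGradyPair_one_tmul hYZ hZX hXY (tpA K)
  have dgZ := isDolanGradyPair_one_tmul hZX hXY hYZ (tppA K)
  exact ⟨lie_one_tmul hXY, lie_one_tmul hYZ, lie_one_tmul hZX,
    dgX.1, dgX.2, dgY.1, dgY.2, dgZ.1, dgZ.2⟩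

/-- the images in the three-point loop algebra of the six generators of
the Tetrahedron algebra satisfy the asserted Tetrahedron relations. -/
theorem stmt11 (K : Type*) [Field K] [CharZero K]
    (x12 x23 x31 x03 x01 x02 : TPL K)
    (h12 : x12 = (1 : Arat K) ⊗ₜ[K] Sl2X.Xv K)
    (h23 : x23 = (1 : Arat K) ⊗ₜ[K] Sl2X.Yv K)
    (h31 : x31 = (1 : Arat K) ⊗ₜ[K] Sl2X.Zv K)
    (h03 : x03 = tA K ⊗ₜ[K] Sl2X.Yv K + (tA K - 1) ⊗ₜ[K] Sl2X.Zv K)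
    (h01 : x01 = tpA K ⊗ₜ[K] Sl2X.Zv K + (tpA K - 1) ⊗ₜ[K] Sl2X.Xv K)
    (h02 : x02 = tppA K ⊗ₜ[K] Sl2X.Xv K + (tppA K - 1) ⊗ₜ[K] Sl2X.Yv K) :
    (⁅x12, x23⁆ = (2:K) • x12 + (2:K) • x23) ∧
    (⁅x23, x31⁆ = (2:K) • x23 + (2:K) • x31) ∧
    (⁅x31, x12⁆ = (2:K) • x31 + (2:K) • x12) ∧
    (⁅x12, ⁅x12, ⁅x12, x03⁆⁆⁆ = (4:K) • ⁅x12, x03⁆) ∧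
    (⁅x03, ⁅x03, ⁅x03, x12⁆⁆⁆ = (4:K) • ⁅x03, x12⁆) ∧
    (⁅x23, ⁅x23, ⁅x23, x01⁆⁆⁆ = (4:K) • ⁅x23, x01⁆) ∧
    (⁅x01, ⁅x01, ⁅x01, x23⁆⁆⁆ = (4:K) • ⁅x01, x23⁆) ∧
    (⁅x31, ⁅x31, ⁅x31, x02⁆⁆⁆ = (4:K) • ⁅x31, x02⁆) ∧
    (⁅x02, ⁅x02, ⁅x02, x31⁆⁆⁆ = (4:K) • ⁅x02, x31⁆) :=
  stmt11_general K x12 x23 x31 x03 x01 x02 h12 h23 h31 h03 h01 h02
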